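/- arXiv:2301.01886 — 2 statements merged into one kernel-verified Lean document; each statement's English description precedes it below -/
import Mathlib

section
/- For any commutative ring R, elements u_1,...,u_s ∈ R, and integers d ≥ 1 with d ≤ s, one has Σ_{k=0}^{d} (-1)^{d-k} e_k(u_1,...,u_s) · h_{d-k}(u_1,...,u_{s+1-d}) = e_d(u_{s+2-d},...,u_s), where the right-hand side is the d-th elementary symmetric polynomial in the last d-1 variables and hence equals 0 (since the number of variables d-1 is less than d). -/
/-!
Write `E_F(X) = ∑ₖ eₖ(F) Xᵏ = ∏_{i ∈ F} (1 + uᵢ X)` and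
`H_m(X) = ∑ⱼ (-1)ʲ hⱼ(u₁, …, u_m) Xʲ = ∏_{i ≤ m} (1 + uᵢ X)⁻¹`.
The sum is the coefficient of `X^d` in `E_{[1,s]} H_m` with `m = s + 1 - d`. All factors
`1 + uᵢ X` with `i ≤ m` cancel, leaving `E_{[m+1,s]}`, whose coefficient of `X^d` is `e_d` of only
`d - 1` variables. On coefficients, the cancellation of the factor `1 + u_{m+1} X` follows from
the recursions `e_{k+1}(F ∪ {a}) = e_{k+1}(F) + u_a e_k(F)` and
`h_{j+1}(u₁, …, u_{m+1}) = h_{j+1}(u₁, …, u_m) + u_{m+1} h_j(u₁, …, u_{m+1})`.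
-/

open Finset

/-- The `k`-th elementary symmetric function of `u` over an index set `F ⊆ ℕ`. -/
noncomputable def esymmOn {R : Type*} [CommRing R] (F : Finset ℕ) (u : ℕ → R) (k : ℕ) : R :=
  ∑ A ∈ F.powersetCard k, ∏ i ∈ A, u i

/-- The complete homogeneous symmetric function of degree `j` of `u_1, …, u_m`. -/
noncomputable def hsymmUpTo {R : Type*} [CommRing R] (m : ℕ) (u : ℕ → R) (j : ℕ) : R :=
  ∑ c ∈ Finset.Nat.antidiagonalTuple m j, ∏ i : Fin m, u (i.1 + 1) ^ c i

theorem Multiset.esymm_cons_succ {R : Type*} [CommSemiring R] (x : R) (s : Multiset R) (k : ℕ) :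
    (x ::ₘ s).esymm (k + 1) = s.esymm (k + 1) + x * s.esymm k := by
  simp only [Multiset.esymm, Multiset.powersetCard_cons, Multiset.map_add, Multiset.sum_add,
    Multiset.map_map, Function.comp_def, Multiset.prod_cons, Multiset.sum_map_mul_left]

section

variable {R : Type*} [CommRing R] (u : ℕ → R)

theorem esymmOn_zero (F : Finset ℕ) : esymmOn F u 0 = 1 := by
  simp [esymmOn]

theorem esymmOn_eq_zero_of_card_lt {F : Finset ℕ} {k : ℕ} (h : #F < k) : esymmOn F u k = 0 := by
  simp [esymmOn, powersetCard_eq_empty.2 h]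

theorem esymmOn_insert_succ {a : ℕ} {F : Finset ℕ} (ha : a ∉ F) (k : ℕ) :
    esymmOn (insert a F) u (k + 1) = esymmOn F u (k + 1) + u a * esymmOn F u k := by
  simp only [esymmOn, ← esymm_map_val, insert_val_of_notMem ha, Multiset.map_cons,
    Multiset.esymm_cons_succ]

theorem hsymmUpTo_zero_right (m : ℕ) : hsymmUpTo m u 0 = 1 := by
  simp [hsymmUpTo, Nat.antidiagonalTuple_zero_right]

theorem hsymmUpTo_zero_succ (j : ℕ) : hsymmUpTo 0 u (j + 1) = 0 := by
  simp [hsymmUpTo, Nat.antidiagonalTuple_zero_succ]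

theorem hsymmUpTo_succ (m j : ℕ) :
    hsymmUpTo (m + 1) u j = ∑ p ∈ antidiagonal j, hsymmUpTo m u p.1 * u (m + 1) ^ p.2 := by
  simp only [hsymmUpTo, sum_mul]
  rw [sum_sigma']
  refine sum_nbij' (fun c => ⟨(j - c (Fin.last m), c (Fin.last m)), Fin.init c⟩)
    (fun x => Fin.snoc x.2 x.1.2) ?_ ?_ ?_ ?_ ?_
  · intro c hc
    simp only [mem_sigma, HasAntidiagonal.mem_antidiagonal, Nat.mem_antidiagonalTuple] at hc ⊢
    rw [Fin.sum_univ_castSucc] at hc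
    exact ⟨by omega, by simp only [Fin.init]; omega⟩
  · rintro ⟨⟨a, b⟩, c⟩ hc
    simp only [mem_sigma, HasAntidiagonal.mem_antidiagonal, Nat.mem_antidiagonalTuple] at hc ⊢
    simp [Fin.sum_univ_castSucc, hc]
  · intro c _
    simp
  · rintro ⟨⟨a, b⟩, c⟩ hc
    simp only [mem_sigma, HasAntidiagonal.mem_antidiagonal] at hc
    simp [← hc.1]
  · intro c _
    simp [Fin.prod_univ_castSucc, Fin.init]

theorem hsymmUpTo_succ_succ (m j : ℕ) :
    hsymmUpTo (m + 1) u (j + 1) =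
      hsymmUpTo m u (j + 1) + u (m + 1) * hsymmUpTo (m + 1) u j := by
  rw [hsymmUpTo_succ, Nat.sum_antidiagonal_succ', hsymmUpTo_succ, mul_sum]
  simp only [pow_zero, mul_one, pow_succ]
  congr 1
  exact sum_congr rfl fun _ _ => by ring

theorem sum_antidiagonal_esymmOn_insert_mul {a : ℕ} {F : Finset ℕ} (ha : a ∉ F) (g : ℕ → R)
    (d : ℕ) :
    ∑ p ∈ antidiagonal (d + 1), esymmOn (insert a F) u p.1 * g p.2 =
      ∑ p ∈ antidiagonal (d + 1), esymmOn F u p.1 * g p.2 +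
        u a * ∑ p ∈ antidiagonal d, esymmOn F u p.1 * g p.2 := by
  simp only [Nat.sum_antidiagonal_succ, esymmOn_insert_succ u ha, esymmOn_zero, add_mul,
    sum_add_distrib, mul_sum, mul_assoc]
  ring

theorem sum_antidiagonal_mul_neg_one_pow_mul_hsymmUpTo (f : ℕ → R) (m d : ℕ) :
    ∑ p ∈ antidiagonal (d + 1), f p.1 * ((-1) ^ p.2 * hsymmUpTo m u p.2) =
      ∑ p ∈ antidiagonal (d + 1), f p.1 * ((-1) ^ p.2 * hsymmUpTo (m + 1) u p.2) +
        u (m + 1) * ∑ p ∈ antidiagonal d, f p.1 * ((-1) ^ p.2 * hsymmUpTo (m + 1) u p.2) := by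
  simp only [Nat.sum_antidiagonal_succ', hsymmUpTo_succ_succ, hsymmUpTo_zero_right, mul_sum]
  rw [add_assoc, ← sum_add_distrib]
  congr 1
  exact sum_congr rfl fun _ _ => by ring

theorem sum_antidiagonal_esymmOn_insert_mul_hsymmUpTo_succ {F : Finset ℕ} {m : ℕ}
    (hm : m + 1 ∉ F) (d : ℕ) :
    ∑ p ∈ antidiagonal d,
        esymmOn (insert (m + 1) F) u p.1 * ((-1) ^ p.2 * hsymmUpTo (m + 1) u p.2) =
      ∑ p ∈ antidiagonal d, esymmOn F u p.1 * ((-1) ^ p.2 * hsymmUpTo m u p.2) := by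
  cases d with
  | zero => simp [esymmOn_zero, hsymmUpTo_zero_right]
  | succ d =>
    rw [sum_antidiagonal_esymmOn_insert_mul u hm fun j => (-1) ^ j * hsymmUpTo (m + 1) u j,
      sum_antidiagonal_mul_neg_one_pow_mul_hsymmUpTo u (esymmOn F u) m]

theorem sum_antidiagonal_esymmOn_Icc_union_mul_hsymmUpTo {G : Finset ℕ} {m : ℕ}
    (hG : ∀ x ∈ G, m < x) (d : ℕ) :
    ∑ p ∈ antidiagonal d, esymmOn (Icc 1 m ∪ G) u p.1 * ((-1) ^ p.2 * hsymmUpTo m u p.2) =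
      esymmOn G u d := by
  induction m with
  | zero =>
    cases d with
    | zero => simp [esymmOn_zero, hsymmUpTo_zero_right]
    | succ d => simp [Nat.sum_antidiagonal_succ', hsymmUpTo_zero_right, hsymmUpTo_zero_succ]
  | succ m ih =>
    have hm : m + 1 ∉ Icc 1 m ∪ G := by
      simpa using fun h => lt_irrefl _ (hG _ h)
    rw [← insert_Icc_right_eq_Icc_add_one (by omega), insert_union,
      sum_antidiagonal_esymmOn_insert_mul_hsymmUpTo_succ u hm,
      ih fun x hx => (hG x hx).trans' (by omega)]

end

/-- `Σ_{k=0}^d (-1)^{d-k} e_k(u_1,…,u_s) h_{d-k}(u_1,…,u_{s+1-d})`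
equals `e_d(u_{s+2-d},…,u_s)`, which is `0`. -/
theorem stmt_5 {R : Type*} [CommRing R] (s d : ℕ) (u : ℕ → R) (hd1 : 1 ≤ d) (hds : d ≤ s) :
    (∑ k ∈ Finset.range (d + 1),
        (-1 : R) ^ (d - k) * esymmOn (Finset.Icc 1 s) u k * hsymmUpTo (s + 1 - d) u (d - k))
        = esymmOn (Finset.Icc (s + 2 - d) s) u d ∧
    esymmOn (Finset.Icc (s + 2 - d) s) u d = 0 := by
  refine ⟨?_, esymmOn_eq_zero_of_card_lt u (by simp; omega)⟩
  have hsplit : Icc 1 s = Icc 1 (s + 1 - d) ∪ Icc (s + 2 - d) s := by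
    ext; simp only [mem_Icc, mem_union]; omega
  rw [← sum_antidiagonal_esymmOn_Icc_union_mul_hsymmUpTo u (m := s + 1 - d)
      (fun x hx => by simp only [mem_Icc] at hx; omega),
    ← hsplit, Nat.sum_antidiagonal_eq_sum_range_succ_mk]
  exact sum_congr rfl fun _ _ => by ring
end

section
/- Let R be an integral domain, M a free R-module of finite rank m, and N an R-module generated by m elements. If there exists a surjective R-module homomorphism g : N → M, then g is injective (hence an isomorphism). -/
/-- if `M` is free of rank `m` over an integral domain `R`, `N` is
generated by `m` elements, and `g : N → M` is a surjective `R`-linear map, then `g`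
is injective (hence an isomorphism). -/
theorem stmt_11 {R M N : Type*} [CommRing R] [IsDomain R]
    [AddCommGroup M] [Module R M] [AddCommGroup N] [Module R N]
    [Module.Free R M] [Module.Finite R M] (m : ℕ)
    (hm : Module.finrank R M = m)
    (S : Finset N) (hScard : S.card = m) (hSspan : Submodule.span R (S : Set N) = ⊤)
    (g : N →ₗ[R] M) (hg : Function.Surjective g) :
    Function.Injective g := by
  classical
  -- enumerate the generating set by `Fin m`
  set v : Fin m → N := fun i => (S.equivFin.symm (Fin.cast hScard.symm i) : N) with hv
  have hrange : Set.range v = (S : Set N) := by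
    ext x
    constructor
    · rintro ⟨i, rfl⟩
      exact (S.equivFin.symm (Fin.cast hScard.symm i)).2
    · rintro hx
      exact ⟨Fin.cast hScard (S.equivFin ⟨x, hx⟩), by simp [hv]⟩
  -- surjection from `Fin m →₀ R` onto `N`
  set π : (Fin m →₀ R) →ₗ[R] N := Finsupp.linearCombination R v with hπ
  have hπsurj : Function.Surjective π := by
    rw [← LinearMap.range_eq_top, hπ, Finsupp.range_linearCombination, hrange, hSspan]
  -- equivalences with `Fin m → R`
  let eF : (Fin m →₀ R) ≃ₗ[R] (Fin m → R) := Finsupp.linearEquivFunOnFinite R R (Fin m)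
  let b := Module.Free.chooseBasis R M
  have hcard : Fintype.card (Module.Free.ChooseBasisIndex R M) = m := by
    rw [← hm, Module.finrank_eq_card_chooseBasisIndex]
  let eM : M ≃ₗ[R] (Fin m → R) :=
    (b.reindex (Fintype.equivFinOfCardEq hcard)).equivFun
  -- the surjective endomorphism of `Fin m → R`
  let f : (Fin m →₀ R) →ₗ[R] M := g ∘ₗ π
  let h : (Fin m → R) →ₗ[R] (Fin m → R) :=
    eM.toLinearMap ∘ₗ f ∘ₗ eF.symm.toLinearMap
  have hhsurj : Function.Surjective h := by
    have : Function.Surjective f := hg.comp hπsurj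
    exact eM.surjective.comp (this.comp eF.symm.surjective)
  have hhinj : Function.Injective h :=
    OrzechProperty.injective_of_surjective_endomorphism h hhsurj
  have hfinj : Function.Injective f := by
    have : Function.Injective (eM.toLinearMap ∘ₗ f ∘ₗ eF.symm.toLinearMap) := hhinj
    have h2 : Function.Injective (f ∘ₗ eF.symm.toLinearMap) := by
      intro x y hxy
      exact this (by simp [LinearMap.comp_apply, hxy])
    intro x y hxy
    have := h2 (a₁ := eF x) (a₂ := eF y) (by simp [LinearMap.comp_apply, hxy])
    exact eF.injective this
  intro x y hxy
  obtain ⟨a, rfl⟩ := hπsurj x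
  obtain ⟨b', rfl⟩ := hπsurj y
  exact congrArg π (hfinj hxy)
end
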